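/- arXiv:1212.5438 — 2 statements merged into one kernel-verified Lean document; each statement's English description precedes it below -/
import Mathlib

section
/- Let K and L be mutually dual closed convex cones in a real Hilbert space H. If the metric projection P_K is K-isotone (v − u ∈ K implies P_K(v) − P_K(u) ∈ K), then P_K is L-isotone (v − u ∈ L implies P_K(v) − P_K(u) ∈ L). -/
open RealInnerProductSpace

variable {H : Type*} [NormedAddCommGroup H] [InnerProductSpace ℝ H] [CompleteSpace H]

/-- `K` is a closed convex cone (containing `0`). -/
def IsClosedConvexCone (K : Set H) : Prop :=
  IsClosed K ∧ (0 : H) ∈ K ∧ (∀ x ∈ K, ∀ y ∈ K, x + y ∈ K) ∧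
    ∀ x ∈ K, ∀ t : ℝ, 0 ≤ t → t • x ∈ K

/-- The dual cone of a set. -/
def dualSet (K : Set H) : Set H := {y | ∀ x ∈ K, 0 ≤ ⟪x, y⟫}

/-- `P` is the metric projection onto `D`. -/
def IsMetricProj (D : Set H) (P : H → H) : Prop :=
  ∀ x, P x ∈ D ∧ ∀ y ∈ D, ‖x - P x‖ ≤ ‖x - y‖

/-- The translate `x - K`. -/
def meetSet (K : Set H) (x : H) : Set H := {z | ∃ k ∈ K, z = x - k}

/-- The translate `x + K`. -/
def joinSet (K : Set H) (x : H) : Set H := {z | ∃ k ∈ K, z = x + k}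

/-!
The function `φ = ‖P_K ·‖ ^ 2` is differentiable with gradient `2 P_K`: the variational inequality
of the projection onto a cone gives `2 ⟪P_K x, y - x⟫ ≤ φ y - φ x`, and nonexpansiveness of `P_K`
bounds the error by `2 ‖y - x‖ ^ 2`. Fix `v - u ∈ L` and `x ∈ K`. For `s ≤ t`, `K`-isotonicity
makes the derivative of `w ↦ φ (w + (t - s) x) - φ w` in the direction `v - u` nonnegative, so
`t ↦ φ (v + t x) - φ (u + t x)` is monotone; hence its derivative at `0`,
`2 ⟪x, P_K v - P_K u⟫`, is nonnegative.
-/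

section

variable {E : Type*} [NormedAddCommGroup E] [InnerProductSpace ℝ E] {K : Set E} {P : E → E}

theorem IsClosedConvexCone.smul_mem (hK : IsClosedConvexCone K) {x : E} (hx : x ∈ K) {t : ℝ}
    (ht : 0 ≤ t) : t • x ∈ K :=
  hK.2.2.2 x hx t ht

theorem IsClosedConvexCone.convex (hK : IsClosedConvexCone K) : Convex ℝ K :=
  fun _ hx _ hy _ _ ha hb _ ↦ hK.2.2.1 _ (hK.smul_mem hx ha) _ (hK.smul_mem hy hb)

namespace IsMetricProj

theorem inner_sub_apply_sub_apply_nonpos (hK : Convex ℝ K) (hP : IsMetricProj K P) (x : E)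
    {y : E} (hy : y ∈ K) : ⟪x - P x, y - P x⟫ ≤ 0 := by
  have hmin : ‖x - P x‖ = ⨅ w : K, ‖x - w‖ := by
    have : Nonempty K := ⟨⟨y, hy⟩⟩
    have hbdd : BddBelow (Set.range fun w : K ↦ ‖x - w‖) :=
      ⟨0, Set.forall_mem_range.2 fun _ ↦ norm_nonneg _⟩
    exact le_antisymm (le_ciInf fun w ↦ (hP x).2 w w.2) (ciInf_le hbdd ⟨P x, (hP x).1⟩)
  exact (norm_eq_iInf_iff_real_inner_le_zero hK (hP x).1).1 hmin y hy

theorem norm_apply_sub_apply_sq_le_inner (hK : Convex ℝ K) (hP : IsMetricProj K P) (x y : E) :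
    ‖P x - P y‖ ^ 2 ≤ ⟪x - y, P x - P y⟫ := by
  have hx := hP.inner_sub_apply_sub_apply_nonpos hK x (hP y).1
  have hy := hP.inner_sub_apply_sub_apply_nonpos hK y (hP x).1
  have hx' : ⟪x - P x, P x - P y⟫ = -⟪x - P x, P y - P x⟫ := by rw [← inner_neg_right, neg_sub]
  have hsplit : x - y = (x - P x) - (y - P y) + (P x - P y) := by abel
  rw [hsplit, inner_add_left, inner_sub_left, real_inner_self_eq_norm_sq]
  linarith

theorem norm_apply_sub_apply_le (hK : Convex ℝ K) (hP : IsMetricProj K P) (x y : E) :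
    ‖P x - P y‖ ≤ ‖x - y‖ := by
  have h := (hP.norm_apply_sub_apply_sq_le_inner hK x y).trans (real_inner_le_norm _ _)
  rw [sq] at h
  rcases (norm_nonneg (P x - P y)).eq_or_lt with h0 | h0
  · rw [← h0]; exact norm_nonneg _
  · exact le_of_mul_le_mul_right h h0

theorem inner_sub_apply_apply_eq_zero (hK : IsClosedConvexCone K) (hP : IsMetricProj K P) (x : E) :
    ⟪x - P x, P x⟫ = 0 := by
  have h0 := hP.inner_sub_apply_sub_apply_nonpos hK.convex x (hK.smul_mem (hP x).1 le_rfl)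
  have h2 := hP.inner_sub_apply_sub_apply_nonpos hK.convex x (hK.smul_mem (hP x).1 zero_le_two)
  rw [zero_smul, zero_sub, inner_neg_right] at h0
  rw [show (2 : ℝ) • P x - P x = P x by module] at h2
  linarith

theorem inner_sub_apply_nonpos (hK : IsClosedConvexCone K) (hP : IsMetricProj K P) (x : E)
    {y : E} (hy : y ∈ K) : ⟪x - P x, y⟫ ≤ 0 := by
  have h := hP.inner_sub_apply_sub_apply_nonpos hK.convex x hy
  rw [inner_sub_right, hP.inner_sub_apply_apply_eq_zero hK] at h
  linarith

theorem two_mul_inner_apply_sub_le (hK : IsClosedConvexCone K) (hP : IsMetricProj K P) (x y : E) :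
    2 * ⟪P x, y - x⟫ ≤ ‖P y‖ ^ 2 - ‖P x‖ ^ 2 := by
  have hy := hP.inner_sub_apply_nonpos hK y (hP x).1
  have hx := hP.inner_sub_apply_apply_eq_zero hK x
  rw [inner_sub_left, real_inner_self_eq_norm_sq] at hx
  rw [inner_sub_left] at hy
  rw [inner_sub_right]
  nlinarith [sq_nonneg (‖P y‖ - ‖P x‖), real_inner_le_norm (P y) (P x), real_inner_comm y (P x),
    real_inner_comm x (P x)]

theorem hasGradientAt_norm_apply_sq [CompleteSpace E] (hK : IsClosedConvexCone K)
    (hP : IsMetricProj K P) (x : E) : HasGradientAt (fun y ↦ ‖P y‖ ^ 2) ((2 : ℝ) • P x) x := by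
  rw [hasGradientAt_iff_hasFDerivAt, hasFDerivAt_iff_isLittleO]
  refine (Asymptotics.IsBigO.of_bound 2 (Filter.Eventually.of_forall fun y ↦ ?_)).trans_isLittleO
    (Asymptotics.isLittleO_pow_sub_sub x one_lt_two)
  have hlow := hP.two_mul_inner_apply_sub_le hK x y
  have hupp := hP.two_mul_inner_apply_sub_le hK y x
  have hlip : ⟪P y - P x, y - x⟫ ≤ ‖y - x‖ ^ 2 := calc
    _ ≤ ‖P y - P x‖ * ‖y - x‖ := real_inner_le_norm _ _
    _ ≤ ‖y - x‖ * ‖y - x‖ := by gcongr; exact hP.norm_apply_sub_apply_le hK.convex y x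
    _ = ‖y - x‖ ^ 2 := (sq _).symm
  rw [show x - y = -(y - x) by abel, inner_neg_right] at hupp
  have hsplit := inner_sub_left (𝕜 := ℝ) (P y) (P x) (y - x)
  rw [InnerProductSpace.toDual_apply_apply, real_inner_smul_left, Real.norm_eq_abs, norm_pow,
    norm_norm, abs_le]
  constructor <;> nlinarith [sq_nonneg ‖y - x‖]

end IsMetricProj

theorem HasGradientAt.hasDerivAt_comp_add_smul [CompleteSpace E] {f : E → ℝ} {g a l : E} {t : ℝ}
    (h : HasGradientAt f g (a + t • l)) : HasDerivAt (fun s : ℝ ↦ f (a + s • l)) ⟪g, l⟫ t := by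
  have hline : HasDerivAt (fun s : ℝ ↦ a + s • l) l t := by
    simpa using ((hasDerivAt_id t).smul_const l).const_add a
  exact h.hasFDerivAt.comp_hasDerivAt t hline

theorem sub_le_sub_of_hasGradientAt [CompleteSpace E] {f : E → ℝ} {G : E → E}
    (hf : ∀ x, HasGradientAt f (G x) x) {l κ : E} (hGl : ∀ w, 0 ≤ ⟪G (w + κ) - G w, l⟫) (z : E) :
    f (z + κ) - f z ≤ f (z + l + κ) - f (z + l) := by
  have hderiv (t : ℝ) : HasDerivAt (fun s : ℝ ↦ f (z + κ + s • l) - f (z + s • l))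
      (⟪G (z + κ + t • l), l⟫ - ⟪G (z + t • l), l⟫) t :=
    (hf _).hasDerivAt_comp_add_smul.sub (hf _).hasDerivAt_comp_add_smul
  have hmono := monotone_of_hasDerivAt_nonneg hderiv fun t ↦ by
    simpa only [Pi.zero_apply, ← inner_sub_left, add_right_comm z κ] using hGl (z + t • l)
  simpa only [zero_smul, add_zero, one_smul, add_right_comm z κ l] using hmono zero_le_one

end

theorem K_isotone_implies_L_isotone_general (K L : Set H) (hK : IsClosedConvexCone K)
    (hL : L = dualSet K)
    (PK : H → H) (hPK : IsMetricProj K PK)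
    (hiso : ∀ u v : H, v - u ∈ K → PK v - PK u ∈ K) :
    ∀ u v : H, v - u ∈ L → PK v - PK u ∈ L := by
  subst hL
  intro u v huv x hx
  have hgrad := hPK.hasGradientAt_norm_apply_sq hK
  have hmono : Monotone fun t : ℝ ↦ ‖PK (v + t • x)‖ ^ 2 - ‖PK (u + t • x)‖ ^ 2 := by
    intro s t hst
    have hGl (w : H) : 0 ≤ ⟪(2 : ℝ) • PK (w + (t - s) • x) - (2 : ℝ) • PK w, v - u⟫ := by
      rw [← smul_sub, real_inner_smul_left]
      exact mul_nonneg zero_le_two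
        (huv _ (hiso w _ (by simpa using hK.smul_mem hx (sub_nonneg.2 hst))))
    have hshift (y : H) : y + s • x + (t - s) • x = y + t • x := by module
    have h := sub_le_sub_of_hasGradientAt hgrad hGl (u + s • x)
    rw [show u + s • x + (v - u) = v + s • x by abel, hshift, hshift] at h
    dsimp only
    linarith
  have hderiv : HasDerivAt (fun t : ℝ ↦ ‖PK (v + t • x)‖ ^ 2 - ‖PK (u + t • x)‖ ^ 2)
      (⟪(2 : ℝ) • PK v, x⟫ - ⟪(2 : ℝ) • PK u, x⟫) 0 := by
    have hv := (hgrad (v + (0 : ℝ) • x)).hasDerivAt_comp_add_smul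
    have hu := (hgrad (u + (0 : ℝ) • x)).hasDerivAt_comp_add_smul
    rw [zero_smul, add_zero] at hv hu
    exact hv.sub hu
  have h := hderiv.nonneg_of_monotone hmono
  rw [← inner_sub_left, ← smul_sub, real_inner_smul_left, real_inner_comm] at h
  linarith

theorem K_isotone_implies_L_isotone (K L : Set H) (hK : IsClosedConvexCone K)
    (hL : L = dualSet K) (hKL : K = dualSet L)
    (PK : H → H) (hPK : IsMetricProj K PK)
    (hiso : ∀ u v : H, v - u ∈ K → PK v - PK u ∈ K) :
    ∀ u v : H, v - u ∈ L → PK v - PK u ∈ L :=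
  K_isotone_implies_L_isotone_general K L hK hL PK hPK hiso
end

section
/- Let K and L be mutually dual closed convex cones in a real Hilbert space H. Then P_K is K-isotone (v − u ∈ K implies P_K(v) − P_K(u) ∈ K) if and only if P_L is L-subadditive (P_L(u) + P_L(v) − P_L(u+v) ∈ L for all u, v ∈ H). -/
open RealInnerProductSpace

variable {H : Type*} [NormedAddCommGroup H] [InnerProductSpace ℝ H] [CompleteSpace H]

private lemma aux_nonpos {a b : ℝ} (hb : 0 ≤ b) (h : ∀ t : ℝ, 0 < t → t ≤ 1 → a ≤ t * b) :
    a ≤ 0 := by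
  by_contra h'
  push_neg at h'
  rcases eq_or_lt_of_le hb with hb0 | hb0
  · have := h 1 one_pos le_rfl
    rw [← hb0] at this
    linarith
  · have ht : 0 < min 1 (a / (2 * b)) := lt_min one_pos (div_pos h' (by linarith))
    have h1 := h _ ht (min_le_left _ _)
    have h2 : min 1 (a / (2 * b)) * b ≤ a / (2 * b) * b :=
      mul_le_mul_of_nonneg_right (min_le_right _ _) hb
    have h3 : a / (2 * b) * b = a / 2 := by field_simp
    linarith

/-- Variational inequality for a metric projection onto a convex cone. -/
private lemma proj_var {C : Set H} {P : H → H} (hP : IsMetricProj C P)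
    (hadd : ∀ x ∈ C, ∀ y ∈ C, x + y ∈ C)
    (hsmul : ∀ x ∈ C, ∀ t : ℝ, 0 ≤ t → t • x ∈ C)
    (w : H) {x : H} (hx : x ∈ C) : ⟪w - P w, x - P w⟫ ≤ 0 := by
  obtain ⟨hPw, hmin⟩ := hP w
  apply aux_nonpos (b := ‖x - P w‖ ^ 2 / 2) (by positivity)
  intro t ht ht1
  have hmem : P w + t • (x - P w) ∈ C := by
    have h1 : (1 - t) • P w ∈ C := hsmul _ hPw _ (by linarith)
    have h2 : t • x ∈ C := hsmul _ hx _ ht.le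
    have h3 := hadd _ h1 _ h2
    have e : (1 - t) • P w + t • x = P w + t • (x - P w) := by
      rw [smul_sub, sub_smul, one_smul]; abel
    rwa [e] at h3
  have h1 : ‖w - P w‖ ≤ ‖w - (P w + t • (x - P w))‖ := (hP w).2 _ hmem
  have h2 : ‖w - P w‖ ^ 2 ≤ ‖w - (P w + t • (x - P w))‖ ^ 2 :=
    pow_le_pow_left₀ (norm_nonneg _) h1 2
  have e : w - (P w + t • (x - P w)) = (w - P w) - t • (x - P w) := by
    rw [smul_sub]; abel
  have hh : ‖(w - P w) - t • (x - P w)‖ ^ 2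
      = ‖w - P w‖ ^ 2 - 2 * ⟪w - P w, t • (x - P w)⟫ + ‖t • (x - P w)‖ ^ 2 :=
    norm_sub_sq_real _ _
  have e2 : ‖t • (x - P w)‖ ^ 2 = t ^ 2 * ‖x - P w‖ ^ 2 := by
    rw [norm_smul, Real.norm_eq_abs, mul_pow, sq_abs]
  rw [e, hh, real_inner_smul_right, e2] at h2
  nlinarith [h2, ht, sq_nonneg t]

/-- Uniqueness: a point of `C` satisfying the variational inequality is the projection. -/
private lemma proj_unique {C : Set H} {P : H → H} (hP : IsMetricProj C P)
    {w m : H} (hm : m ∈ C) (hvar : ∀ x ∈ C, ⟪w - m, x - m⟫ ≤ 0) : P w = m := by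
  obtain ⟨hPw, hmin⟩ := hP w
  have h1 : ‖w - P w‖ ≤ ‖w - m‖ := hmin m hm
  have h2 := hvar (P w) hPw
  have e : w - P w = (w - m) - (P w - m) := by abel
  have h3 : ‖w - P w‖ ^ 2 = ‖w - m‖ ^ 2 - 2 * ⟪w - m, P w - m⟫ + ‖P w - m‖ ^ 2 := by
    rw [e, norm_sub_sq_real]
  have h4 : ‖w - P w‖ ^ 2 ≤ ‖w - m‖ ^ 2 := pow_le_pow_left₀ (norm_nonneg _) h1 2
  have h5 : ‖P w - m‖ ^ 2 ≤ 0 := by nlinarith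
  have h7 : ‖P w - m‖ = 0 :=
    le_antisymm (by nlinarith [norm_nonneg (P w - m)]) (norm_nonneg _)
  exact sub_eq_zero.mp (norm_eq_zero.mp h7)

theorem PK_K_isotone_iff_PL_L_subadditive (K L : Set H) (hK : IsClosedConvexCone K)
    (hL : L = dualSet K) (hKL : K = dualSet L)
    (PK PL : H → H) (hPK : IsMetricProj K PK) (hPL : IsMetricProj L PL) :
    (∀ u v : H, v - u ∈ K → PK v - PK u ∈ K) ↔
      (∀ u v : H, PL u + PL v - PL (u + v) ∈ L) := by
  obtain ⟨-, hK0, hKadd, hKsmul⟩ := hK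
  have memL : ∀ y : H, y ∈ L ↔ ∀ a ∈ K, 0 ≤ ⟪a, y⟫ := fun y => by rw [hL]; exact Iff.rfl
  have memK : ∀ y : H, y ∈ K ↔ ∀ a ∈ L, 0 ≤ ⟪a, y⟫ := fun y => by rw [hKL]; exact Iff.rfl
  have pair : ∀ x ∈ K, ∀ y ∈ L, 0 ≤ ⟪x, y⟫ := fun x hx y hy => (memL y).1 hy x hx
  have hL0 : (0 : H) ∈ L := (memL 0).2 (fun a _ => by simp)
  have hLadd : ∀ x ∈ L, ∀ y ∈ L, x + y ∈ L := fun x hx y hy => (memL _).2 (fun a ha => by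
    rw [inner_add_right]
    exact add_nonneg ((memL x).1 hx a ha) ((memL y).1 hy a ha))
  have hLsmul : ∀ x ∈ L, ∀ t : ℝ, 0 ≤ t → t • x ∈ L := fun x hx t ht => (memL _).2
    (fun a ha => by
      rw [real_inner_smul_right]
      exact mul_nonneg ht ((memL x).1 hx a ha))
  have varK : ∀ (w : H) {x : H}, x ∈ K → ⟪w - PK w, x - PK w⟫ ≤ 0 :=
    fun w _ hx => proj_var hPK hKadd hKsmul w hx
  have varL : ∀ (w : H) {x : H}, x ∈ L → ⟪w - PL w, x - PL w⟫ ≤ 0 :=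
    fun w _ hx => proj_var hPL hLadd hLsmul w hx
  have projK_id : ∀ {x : H}, x ∈ K → PK x = x := by
    intro x hx
    have h : ‖x - PK x‖ ≤ 0 := by simpa using (hPK x).2 x hx
    exact (sub_eq_zero.mp (norm_eq_zero.mp (le_antisymm h (norm_nonneg _)))).symm
  have projL_id : ∀ {x : H}, x ∈ L → PL x = x := by
    intro x hx
    have h : ‖x - PL x‖ ≤ 0 := by simpa using (hPL x).2 x hx
    exact (sub_eq_zero.mp (norm_eq_zero.mp (le_antisymm h (norm_nonneg _)))).symm
  have orthK : ∀ w : H, ⟪w - PK w, PK w⟫ = 0 := by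
    intro w
    have h1 := varK w hK0
    rw [zero_sub, inner_neg_right] at h1
    have h2 := varK w (hKsmul _ (hPK w).1 2 (by norm_num))
    have e : (2 : ℝ) • PK w - PK w = PK w := by rw [two_smul]; abel
    rw [e] at h2
    linarith
  have orthL : ∀ w : H, ⟪w - PL w, PL w⟫ = 0 := by
    intro w
    have h1 := varL w hL0
    rw [zero_sub, inner_neg_right] at h1
    have h2 := varL w (hLsmul _ (hPL w).1 2 (by norm_num))
    have e : (2 : ℝ) • PL w - PL w = PL w := by rw [two_smul]; abel
    rw [e] at h2
    linarith
  have resL_K : ∀ w : H, ∀ ℓ ∈ L, ⟪w - PL w, ℓ⟫ ≤ 0 := by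
    intro w ℓ hℓ
    have h := varL w (hLadd _ (hPL w).1 _ hℓ)
    rwa [add_sub_cancel_left] at h
  have resK_memK : ∀ w : H, PL w - w ∈ K := by
    intro w
    apply (memK _).2
    intro a ha
    have h := resL_K w a ha
    have e : PL w - w = -(w - PL w) := by abel
    rw [real_inner_comm, e, inner_neg_left]
    linarith
  have moreau : ∀ v : H, PK v = v + PL (-v) := by
    intro v
    apply proj_unique hPK
    · have h := resK_memK (-v)
      rwa [sub_neg_eq_add, add_comm] at h
    · intro x hx
      have e : v - (v + PL (-v)) = -(PL (-v)) := by abel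
      have h1 : ⟪PL (-v), x - (v + PL (-v))⟫ = ⟪PL (-v), x⟫ - ⟪PL (-v), v + PL (-v)⟫ := by
        rw [inner_sub_right]
      have h2 : ⟪PL (-v), v + PL (-v)⟫ = 0 := by
        have horth := orthL (-v)
        have e2 : v + PL (-v) = -(-v - PL (-v)) := by abel
        rw [e2, inner_neg_right, real_inner_comm, horth, neg_zero]
      have h3 : 0 ≤ ⟪PL (-v), x⟫ := by
        rw [real_inner_comm]; exact pair x hx _ ((hPL (-v)).1)
      rw [e, inner_neg_left, h1, h2]
      linarith
  have projL_zero : ∀ w : H, (∀ y ∈ L, ⟪w, y⟫ ≤ 0) → PL w = 0 := by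
    intro w h
    apply proj_unique hPL hL0
    intro x hx
    simpa using h x hx
  have projL_negK : ∀ {k : H}, k ∈ K → PL (-k) = 0 := by
    intro k hk
    apply projL_zero
    intro y hy
    rw [inner_neg_left]
    have := pair _ hk _ hy
    linarith
  constructor
  · -- isotone ⇒ subadditive
    intro hiso u v
    have hxL := (hPL u).1
    have hyL := (hPL v).1
    have hzL := (hPL (u + v)).1
    have hk3K : PL (u + v) - u - v ∈ K := by
      have h := resK_memK (u + v)
      rwa [sub_add_eq_sub_sub] at h
    have hdiff : (PL (u + v) - u - v) - (PL (u + v) - PL u - PL v) ∈ K := by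
      have h1 := resK_memK u
      have h2 := resK_memK v
      have e : (PL (u + v) - u - v) - (PL (u + v) - PL u - PL v)
          = (PL u - u) + (PL v - v) := by abel
      rw [e]; exact hKadd _ h1 _ h2
    have hiso1 := hiso (PL (u + v) - PL u - PL v) (PL (u + v) - u - v) hdiff
    rw [projK_id hk3K] at hiso1
    have hpK : PK (PL (u + v) - PL u - PL v) ∈ K := (hPK _).1
    have hz3 : ⟪PL (u + v) - u - v, PL (u + v)⟫ = 0 := by
      have horth := orthL (u + v)
      have e : PL (u + v) - u - v = -((u + v) - PL (u + v)) := by abel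
      rw [e, inner_neg_left, horth, neg_zero]
    have hzp : ⟪PK (PL (u + v) - PL u - PL v), PL (u + v)⟫ ≤ 0 := by
      have h1 := pair _ hiso1 _ hzL
      rw [inner_sub_left, hz3] at h1
      linarith
    have hp0 : PK (PL (u + v) - PL u - PL v) = 0 := by
      have h := orthK (PL (u + v) - PL u - PL v)
      rw [inner_sub_left, real_inner_self_eq_norm_sq] at h
      have hpx : 0 ≤ ⟪PK (PL (u + v) - PL u - PL v), PL u⟫ := pair _ hpK _ hxL
      have hpy : 0 ≤ ⟪PK (PL (u + v) - PL u - PL v), PL v⟫ := pair _ hpK _ hyL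
      have h2 : ⟪PL (u + v) - PL u - PL v, PK (PL (u + v) - PL u - PL v)⟫ ≤ 0 := by
        have c0 : ⟪PL (u + v) - PL u - PL v, PK (PL (u + v) - PL u - PL v)⟫
            = ⟪PL (u + v), PK (PL (u + v) - PL u - PL v)⟫
              - ⟪PL u, PK (PL (u + v) - PL u - PL v)⟫
              - ⟪PL v, PK (PL (u + v) - PL u - PL v)⟫ := by
          rw [inner_sub_left, inner_sub_left]
        have c1 : ⟪PL u, PK (PL (u + v) - PL u - PL v)⟫
            = ⟪PK (PL (u + v) - PL u - PL v), PL u⟫ := by rw [real_inner_comm]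
        have c2 : ⟪PL v, PK (PL (u + v) - PL u - PL v)⟫
            = ⟪PK (PL (u + v) - PL u - PL v), PL v⟫ := by rw [real_inner_comm]
        have c3 : ⟪PL (u + v), PK (PL (u + v) - PL u - PL v)⟫
            = ⟪PK (PL (u + v) - PL u - PL v), PL (u + v)⟫ := by rw [real_inner_comm]
        rw [c0, c1, c2, c3]
        linarith
      have h3 : ‖PK (PL (u + v) - PL u - PL v)‖ ^ 2 ≤ 0 := by linarith
      have h4 : ‖PK (PL (u + v) - PL u - PL v)‖ = 0 :=
        le_antisymm (by nlinarith [norm_nonneg (PK (PL (u + v) - PL u - PL v))])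
          (norm_nonneg _)
      exact norm_eq_zero.mp h4
    apply (memL _).2
    intro a ha
    have h := varK (PL (u + v) - PL u - PL v) ha
    rw [hp0, sub_zero, sub_zero] at h
    have e : PL (u + v) - PL u - PL v = -(PL u + PL v - PL (u + v)) := by abel
    rw [e, inner_neg_left] at h
    rw [real_inner_comm]
    linarith
  · -- subadditive ⇒ isotone
    intro hsub u v huv
    have hAL := (hPL (-v)).1
    have hBL := (hPL (-u)).1
    have hBA : PL (-u) - PL (-v) ∈ L := by
      have h := hsub (-u) (-(v - u))
      rw [projL_negK huv, add_zero] at h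
      have e : -u + -(v - u) = -v := by abel
      rw [e] at h
      exact h
    have hd : PK v - PK u = (v - u) + PL (-v) - PL (-u) := by
      rw [moreau v, moreau u]; abel
    have harg : -(PK v - PK u) = (PL (-u) - PL (-v)) + -(v - u) := by
      rw [hd]; abel
    have hq1 : (PL (-u) - PL (-v)) - PL (-(PK v - PK u)) ∈ L := by
      have h := hsub (PL (-u) - PL (-v)) (-(v - u))
      rw [projL_id hBA, projL_negK huv, add_zero, ← harg] at h
      exact h
    have hq2 : PL (-u) - PL (-(PK v - PK u)) ∈ L := by
      have e : PL (-u) - PL (-(PK v - PK u))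
          = PL (-v) + ((PL (-u) - PL (-v)) - PL (-(PK v - PK u))) := by abel
      rw [e]
      exact hLadd _ hAL _ hq1
    have hqL := (hPL (-(PK v - PK u))).1
    have hBu : ⟪PL (-u), PK u⟫ = 0 := by
      have horth := orthL (-u)
      have e : PK u = -(-u - PL (-u)) := by rw [moreau u]; abel
      rw [e, inner_neg_right, real_inner_comm, horth, neg_zero]
    have hqPKu : ⟪PL (-(PK v - PK u)), PK u⟫ = 0 := by
      have h1 : 0 ≤ ⟪PK u, PL (-u) - PL (-(PK v - PK u))⟫ := pair _ (hPK u).1 _ hq2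
      rw [inner_sub_right] at h1
      have h2 : 0 ≤ ⟪PK u, PL (-(PK v - PK u))⟫ := pair _ (hPK u).1 _ hqL
      have h3 : ⟪PK u, PL (-u)⟫ = 0 := by rw [real_inner_comm]; exact hBu
      rw [real_inner_comm]
      linarith
    have hq0 : PL (-(PK v - PK u)) = 0 := by
      have h := orthL (-(PK v - PK u))
      rw [inner_sub_left, real_inner_self_eq_norm_sq] at h
      have h2 : ⟪-(PK v - PK u), PL (-(PK v - PK u))⟫ ≤ 0 := by
        rw [inner_neg_left, inner_sub_left]
        have h3 : ⟪PK u, PL (-(PK v - PK u))⟫ = 0 := by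
          rw [real_inner_comm]; exact hqPKu
        have h4 : 0 ≤ ⟪PK v, PL (-(PK v - PK u))⟫ := pair _ (hPK v).1 _ hqL
        linarith
      have h3 : ‖PL (-(PK v - PK u))‖ ^ 2 ≤ 0 := by linarith
      have h4 : ‖PL (-(PK v - PK u))‖ = 0 :=
        le_antisymm (by nlinarith [norm_nonneg (PL (-(PK v - PK u)))]) (norm_nonneg _)
      exact norm_eq_zero.mp h4
    apply (memK _).2
    intro a ha
    have h := varL (-(PK v - PK u)) ha
    rw [hq0, sub_zero, sub_zero, inner_neg_left] at h
    rw [real_inner_comm]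
    linarith
end
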